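/- For every c ≥ 0, (1/2)·erfc(c/√2) > (1/√π) · exp(−c²/2) / (√(c²/2) + √(c²/2 + 2)). -/

import Mathlib

/-!
With `u(s) = √(s² + 2)` put `F(s) = e^{-s²} / (s + u(s))`. Because `(s + u)(u - s) = u² - s² = 2`,
the derivative of `F` is `-e^{-s²}` plus the positive term `e^{-s²} (1 - s/u) / (s + u)²`.
Integrating `F'` over `(x, ∞)`, where `F` tends to `0`, gives
`∫_x^∞ e^{-s²} ds = F(x) + ∫_x^∞ (positive) > F(x)`, and the theorem is this at `x = c/√2`.
-/

open Real

/-- The complementary error function erfc(t) = (2/√π) ∫_t^∞ e^{−s²} ds. -/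
noncomputable def erfc (t : ℝ) : ℝ :=
  (2 / Real.sqrt π) * ∫ s in Set.Ioi t, Real.exp (-s ^ 2)

open MeasureTheory Filter Set Topology

lemma abs_lt_sqrt_sq_add {a : ℝ} (ha : 0 < a) (s : ℝ) : |s| < √(s ^ 2 + a) := by
  rw [← sqrt_sq_eq_abs]
  exact sqrt_lt_sqrt (sq_nonneg s) (by linarith)

lemma add_sqrt_sq_add_pos {a : ℝ} (ha : 0 < a) (s : ℝ) : 0 < s + √(s ^ 2 + a) := by
  linarith [abs_lt_sqrt_sq_add ha s, neg_abs_le s]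

noncomputable def gaussTailLowerBound (s : ℝ) : ℝ :=
  exp (-s ^ 2) / (s + √(s ^ 2 + 2))

noncomputable def gaussTailLowerBoundDefect (s : ℝ) : ℝ :=
  exp (-s ^ 2) * (1 - s / √(s ^ 2 + 2)) / (s + √(s ^ 2 + 2)) ^ 2

lemma hasDerivAt_gaussTailLowerBound (s : ℝ) :
    HasDerivAt gaussTailLowerBound (gaussTailLowerBoundDefect s - exp (-s ^ 2)) s := by
  have hsu : 0 < s + √(s ^ 2 + 2) := add_sqrt_sq_add_pos two_pos s
  have hu_sq : √(s ^ 2 + 2) ^ 2 = s ^ 2 + 2 := sq_sqrt (by positivity)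
  have hexp : HasDerivAt (fun s : ℝ => exp (-s ^ 2)) (exp (-s ^ 2) * -(2 * s)) s := by
    simpa using ((hasDerivAt_pow 2 s).neg).exp
  have hden := (hasDerivAt_id' s).add (((hasDerivAt_pow 2 s).add_const 2).sqrt (by positivity))
  refine (hexp.div hden hsu.ne').congr_deriv ?_
  unfold gaussTailLowerBoundDefect
  simp only [Pi.add_apply, Nat.cast_ofNat, Nat.add_one_sub_one, pow_one]
  field_simp
  linear_combination √(s ^ 2 + 2) * hu_sq

lemma gaussTailLowerBoundDefect_pos (s : ℝ) : 0 < gaussTailLowerBoundDefect s := by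
  have hu : 0 < √(s ^ 2 + 2) := sqrt_pos.2 (by positivity)
  have hs : s / √(s ^ 2 + 2) < 1 :=
    (div_lt_one hu).2 ((le_abs_self s).trans_lt (abs_lt_sqrt_sq_add two_pos s))
  unfold gaussTailLowerBoundDefect
  exact div_pos (mul_pos (exp_pos _) (by linarith)) (pow_pos (add_sqrt_sq_add_pos two_pos s) 2)

lemma gaussTailLowerBoundDefect_le {s : ℝ} (hs : 0 ≤ s) :
    gaussTailLowerBoundDefect s ≤ exp (-s ^ 2) := by
  set u := √(s ^ 2 + 2)
  have hu : 0 < u := sqrt_pos.2 (by positivity)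
  have hu_sq : u ^ 2 = s ^ 2 + 2 := sq_sqrt (by positivity)
  have hnum : 1 - s / u ≤ 1 := by linarith [div_nonneg hs hu.le]
  have hden : 1 ≤ (s + u) ^ 2 := by nlinarith
  calc gaussTailLowerBoundDefect s = exp (-s ^ 2) * (1 - s / u) / (s + u) ^ 2 := rfl
    _ ≤ exp (-s ^ 2) * 1 / 1 := by gcongr
    _ = exp (-s ^ 2) := by ring

lemma continuous_gaussTailLowerBoundDefect : Continuous gaussTailLowerBoundDefect := by
  have hu : ∀ s : ℝ, √(s ^ 2 + 2) ≠ 0 := fun s => (sqrt_pos.2 (by positivity)).ne'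
  unfold gaussTailLowerBoundDefect
  refine Continuous.div (by fun_prop) (by fun_prop) fun s => ?_
  exact pow_ne_zero 2 (add_sqrt_sq_add_pos two_pos s).ne'

lemma integrableOn_Ioi_exp_neg_sq (x : ℝ) : IntegrableOn (fun s : ℝ => exp (-s ^ 2)) (Ioi x) := by
  simpa using (integrable_exp_neg_mul_sq one_pos).integrableOn

lemma integrableOn_Ioi_gaussTailLowerBoundDefect (x : ℝ) :
    IntegrableOn gaussTailLowerBoundDefect (Ioi x) := by
  have hIoi : IntegrableOn gaussTailLowerBoundDefect (Ioi 0) := by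
    refine (integrableOn_Ioi_exp_neg_sq 0).mono'
      continuous_gaussTailLowerBoundDefect.aestronglyMeasurable ?_
    filter_upwards [ae_restrict_mem measurableSet_Ioi] with s hs
    rw [norm_of_nonneg (gaussTailLowerBoundDefect_pos s).le]
    exact gaussTailLowerBoundDefect_le (le_of_lt hs)
  have hIcc : IntegrableOn gaussTailLowerBoundDefect (Icc x 0) :=
    continuous_gaussTailLowerBoundDefect.integrableOn_Icc
  exact (hIcc.union hIoi).mono_set fun s hs =>
    (le_or_gt s 0).imp (fun h => ⟨hs.le, h⟩) id

lemma tendsto_gaussTailLowerBound_atTop : Tendsto gaussTailLowerBound atTop (𝓝 0) := by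
  have hexp : Tendsto (fun s : ℝ => exp (-s ^ 2)) atTop (𝓝 0) :=
    tendsto_exp_atBot.comp (tendsto_neg_atTop_atBot.comp (tendsto_pow_atTop two_ne_zero))
  have hden : Tendsto (fun s : ℝ => s + √(s ^ 2 + 2)) atTop atTop :=
    tendsto_id.atTop_add_nonneg fun s => sqrt_nonneg _
  exact hexp.div_atTop hden

lemma integral_Ioi_exp_neg_sq_eq (x : ℝ) :
    ∫ s in Ioi x, exp (-s ^ 2) =
      gaussTailLowerBound x + ∫ s in Ioi x, gaussTailLowerBoundDefect s := by
  have hFTC := integral_Ioi_of_hasDerivAt_of_tendsto'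
    (fun s _ => hasDerivAt_gaussTailLowerBound s)
    ((integrableOn_Ioi_gaussTailLowerBoundDefect x).sub (integrableOn_Ioi_exp_neg_sq x))
    tendsto_gaussTailLowerBound_atTop
  rw [integral_sub (integrableOn_Ioi_gaussTailLowerBoundDefect x)
    (integrableOn_Ioi_exp_neg_sq x)] at hFTC
  linarith

lemma integral_Ioi_gaussTailLowerBoundDefect_pos (x : ℝ) :
    0 < ∫ s in Ioi x, gaussTailLowerBoundDefect s := by
  rw [setIntegral_pos_iff_support_of_nonneg_ae
    (Eventually.of_forall fun s => (gaussTailLowerBoundDefect_pos s).le)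
    (integrableOn_Ioi_gaussTailLowerBoundDefect x)]
  have hsupp : Function.support gaussTailLowerBoundDefect = univ :=
    Function.support_eq_univ fun s => (gaussTailLowerBoundDefect_pos s).ne'
  simp [hsupp]

lemma gaussTailLowerBound_lt_integral_Ioi (x : ℝ) :
    gaussTailLowerBound x < ∫ s in Ioi x, exp (-s ^ 2) := by
  rw [integral_Ioi_exp_neg_sq_eq]
  linarith [integral_Ioi_gaussTailLowerBoundDefect_pos x]

/-- the Abramowitz–Stegun lower bound for erfc at c/√2. -/
theorem stmt3 (c : ℝ) (hc : 0 ≤ c) :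
    (1 / 2) * erfc (c / Real.sqrt 2) >
      (1 / Real.sqrt π) * Real.exp (-c ^ 2 / 2) /
        (Real.sqrt (c ^ 2 / 2) + Real.sqrt (c ^ 2 / 2 + 2)) := by
  set x := c / √2
  have hx_sq : x ^ 2 = c ^ 2 / 2 := by rw [div_pow, sq_sqrt zero_le_two]
  have hsqrt : √(c ^ 2 / 2) = x := by rw [← hx_sq, sqrt_sq (by positivity)]
  rw [hsqrt, ← hx_sq, show -c ^ 2 / 2 = -x ^ 2 by rw [hx_sq]; ring, mul_div_assoc]
  have hbound := gaussTailLowerBound_lt_integral_Ioi x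
  unfold gaussTailLowerBound at hbound
  unfold erfc
  have hπ : 0 < √π := sqrt_pos.2 pi_pos
  calc 1 / √π * (exp (-x ^ 2) / (x + √(x ^ 2 + 2)))
      < 1 / √π * ∫ s in Ioi x, exp (-s ^ 2) := by gcongr
    _ = 1 / 2 * (2 / √π * ∫ s in Ioi x, exp (-s ^ 2)) := by ring
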